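/- For positive integers s_ℓ,…,s_r, set d_n = s_n + ⋯ + s_r, and let y_i[ℓ m] = (−1)^{m−ℓ} Σ_{0 ≤ i_ℓ ≤ ⋯ ≤ i_{m−1} < i} u_ℓ^{q^{i_ℓ}}⋯u_{m−1}^{q^{i_{m−1}}} / (L_{i_ℓ}^{s_ℓ}⋯L_{i_{m−1}}^{s_{m−1}} L_i^{d_m}) for ℓ < m, and y_i[ℓ ℓ] = 1/L_i^{d_ℓ}. Then as formal power series in u_ℓ,…,u_r (or as finite truncated sums up to i ≤ N), Σ_{i ≥ 0} Σ_{m=ℓ}^{r} y_i[ℓ m] (−1)^{r−m} u_m^{q^i}⋯u_r^{q^i} = (−1)^{r−ℓ} Σ_{0 ≤ i_ℓ ≤ ⋯ ≤ i_r} u_ℓ^{q^{i_ℓ}}⋯u_r^{q^{i_r}} / (L_{i_ℓ}^{s_ℓ}⋯L_{i_r}^{s_r}) = (−1)^{r−ℓ} Li*_{(s_r,…,s_ℓ)}(u_r,…,u_ℓ). -/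

import Mathlib

/-!
Write `T a k = u_{ℓ+a}^{q^k} / L_k^{s_{ℓ+a}}` and `S(n, M)` for the sum of `∏_j T j (f j)` over
monotone `f : Fin n → Fin M`. Up to the common sign `(-1)^(r-ℓ)`, the `(i, m = ℓ + t)` term of the
left side is `S(t, i) · ∏_{e=t}^{r-ℓ} T e i`: it collects the monotone tuples with largest value `i`
attained exactly at the positions `t, …, r-ℓ`. Summing over `t` and then over `i` thus regroups
`S(r-ℓ+1, N+1)`. Both regroupings follow from the recursion
`S(n+1, M+1) = S(n+1, M) + S(n, M+1) · T n M`, which splits the monotone maps according to whether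
their last value is `M`.
-/

open scoped Classical

/-- The explicit entries `y_i[ℓ m] = (−1)^(m−ℓ) Σ_{0 ≤ i_ℓ ≤ ⋯ ≤ i_{m−1} < i}
`u_ℓ^{q^{i_ℓ}}⋯u_{m−1}^{q^{i_{m−1}}}/(L_{i_ℓ}^{s_ℓ}⋯L_{i_{m−1}}^{s_{m−1}} L_i^{d_m})`
(for `m = ℓ` this is `1/L_i^{d_ℓ}`). -/
noncomputable def yform {K : Type*} [Field K] (q : ℕ) (L : ℕ → K) (s d : ℕ → ℕ)
    (u : ℕ → K) (ℓ i m : ℕ) : K :=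
  (-1 : K) ^ (m - ℓ) *
    (∑ f ∈ Finset.univ.filter (fun f : Fin (m - ℓ) → Fin i => Monotone f),
      ∏ j : Fin (m - ℓ),
        u (ℓ + (j : ℕ)) ^ q ^ ((f j : ℕ)) * (L ((f j : ℕ)) ^ s (ℓ + (j : ℕ)))⁻¹) *
    (L i ^ d m)⁻¹

open Finset

section MonotoneSum

variable {R : Type*} [CommSemiring R] (T : ℕ → ℕ → R)

noncomputable def monotoneSum (n M : ℕ) : R :=
  ∑ f ∈ univ.filter (fun f : Fin n → Fin M => Monotone f), ∏ j : Fin n, T j (f j)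

lemma monotone_snoc_last_iff {n M : ℕ} (g : Fin n → Fin (M + 1)) :
    Monotone (Fin.snoc g (Fin.last M) : Fin (n + 1) → Fin (M + 1)) ↔ Monotone g := by
  refine ⟨fun h x y hxy => ?_, fun h x y hxy => ?_⟩
  · simpa only [Fin.snoc_castSucc] using h (Fin.castSucc_le_castSucc_iff.2 hxy)
  · induction y using Fin.lastCases with
    | last => simpa only [Fin.snoc_last] using Fin.le_last _
    | cast y =>
      induction x using Fin.lastCases with
      | last => exact absurd hxy (not_le.2 (Fin.castSucc_lt_last y))
      | cast x => simpa only [Fin.snoc_castSucc] using h (Fin.castSucc_le_castSucc_iff.1 hxy)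

lemma ne_last_of_monotone {n M : ℕ} {f : Fin (n + 1) → Fin (M + 1)} (hf : Monotone f)
    (hlast : f (Fin.last n) ≠ Fin.last M) (j : Fin (n + 1)) : f j ≠ Fin.last M :=
  fun h => hlast (le_antisymm (Fin.le_last _) (h ▸ hf (Fin.le_last j)))

lemma sum_monotone_last_ne {n M : ℕ} :
    ∑ f ∈ univ.filter (fun f : Fin (n + 1) → Fin (M + 1) =>
        Monotone f ∧ ¬f (Fin.last n) = Fin.last M), ∏ j : Fin (n + 1), T j (f j)
      = monotoneSum T (n + 1) M := by
  refine (sum_bij' (fun g _ => Fin.castSucc ∘ g)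
    (fun f hf j => (f j).castPred
      (ne_last_of_monotone (mem_filter.1 hf).2.1 (mem_filter.1 hf).2.2 j))
    (fun g hg => ?_) (fun f hf => ?_) (fun g _ => rfl) (fun f _ => ?_) (fun g _ => rfl)).symm
  · obtain ⟨-, hg⟩ := mem_filter.1 hg
    exact mem_filter.2
      ⟨mem_univ _, Fin.strictMono_castSucc.monotone.comp hg, (Fin.castSucc_lt_last _).ne⟩
  · exact mem_filter.2 ⟨mem_univ _, Fin.monotone_castPred_comp _ (mem_filter.1 hf).2.1⟩
  · funext j; exact Fin.castSucc_castPred _ _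

lemma sum_monotone_last_eq {n M : ℕ} :
    ∑ f ∈ univ.filter (fun f : Fin (n + 1) → Fin (M + 1) =>
        Monotone f ∧ f (Fin.last n) = Fin.last M), ∏ j : Fin (n + 1), T j (f j)
      = monotoneSum T n (M + 1) * T n M := by
  rw [monotoneSum, sum_mul]
  refine (sum_nbij' (fun g => Fin.snoc g (Fin.last M)) Fin.init (fun g hg => ?_) (fun f hf => ?_)
    (fun g _ => Fin.init_snoc _ _) (fun f hf => ?_) (fun g _ => ?_)).symm
  · obtain ⟨-, hg⟩ := mem_filter.1 hg
    exact mem_filter.2 ⟨mem_univ _, (monotone_snoc_last_iff g).2 hg, Fin.snoc_last _ _⟩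
  · obtain ⟨-, hf, hlast⟩ := mem_filter.1 hf
    refine mem_filter.2 ⟨mem_univ _, ?_⟩
    rwa [← monotone_snoc_last_iff, ← hlast, Fin.snoc_init_self]
  · rw [← (mem_filter.1 hf).2.2, Fin.snoc_init_self]
  · simp [Fin.prod_univ_castSucc]

lemma monotoneSum_succ_succ (n M : ℕ) :
    monotoneSum T (n + 1) (M + 1) = monotoneSum T (n + 1) M + monotoneSum T n (M + 1) * T n M := by
  rw [monotoneSum, ← sum_filter_not_add_sum_filter _ (fun f => f (Fin.last n) = Fin.last M),
    filter_filter, filter_filter, sum_monotone_last_ne, sum_monotone_last_eq]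

@[simp] lemma monotoneSum_zero_left (M : ℕ) : monotoneSum T 0 M = 1 := by
  simp [monotoneSum, Subsingleton.elim _ (Fin.elim0 : Fin 0 → Fin M), Monotone]

@[simp] lemma monotoneSum_succ_zero (n : ℕ) : monotoneSum T (n + 1) 0 = 0 := by
  simp [monotoneSum]

lemma monotoneSum_succ_eq_sum_range (n M : ℕ) :
    monotoneSum T (n + 1) M = ∑ i ∈ range M, monotoneSum T n (i + 1) * T n i := by
  induction M with
  | zero => simp
  | succ M ih => rw [monotoneSum_succ_succ, ih, sum_range_succ]

lemma sum_range_monotoneSum_mul_prod_Icc (n i : ℕ) :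
    ∑ t ∈ range (n + 1), monotoneSum T t i * ∏ e ∈ Icc t n, T e i
      = monotoneSum T n (i + 1) * T n i := by
  induction n with
  | zero => simp
  | succ n ih =>
    have hsplit : ∀ t ∈ range (n + 1), monotoneSum T t i * ∏ e ∈ Icc t (n + 1), T e i
        = monotoneSum T t i * (∏ e ∈ Icc t n, T e i) * T (n + 1) i := fun t ht => by
      rw [prod_Icc_succ_top (by grind), mul_assoc]
    rw [sum_range_succ, sum_congr rfl hsplit, ← sum_mul, ih, monotoneSum_succ_succ T n i]
    simp only [Icc_self, prod_singleton]
    ring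

end MonotoneSum

def starTerm {K : Type*} [Field K] (q : ℕ) (L : ℕ → K) (s : ℕ → ℕ) (u : ℕ → K) (ℓ a k : ℕ) : K :=
  u (ℓ + a) ^ q ^ k * (L k ^ s (ℓ + a))⁻¹

section

variable {K : Type*} [Field K] (q : ℕ) (L : ℕ → K) (s d : ℕ → ℕ) (u : ℕ → K) (ℓ : ℕ)

lemma yform_add (i t : ℕ) :
    yform q L s d u ℓ i (ℓ + t)
      = (-1) ^ t * monotoneSum (starTerm q L s u ℓ) t i * (L i ^ d (ℓ + t))⁻¹ := by
  rw [yform, Nat.add_sub_cancel_left]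
  rfl

lemma yform_mul_prod_Icc {n t : ℕ} (ht : t ≤ n)
    (hd : d (ℓ + t) = ∑ e ∈ Icc (ℓ + t) (ℓ + n), s e) (i : ℕ) :
    yform q L s d u ℓ i (ℓ + t) * (-1) ^ (ℓ + n - (ℓ + t)) * ∏ e ∈ Icc (ℓ + t) (ℓ + n), u e ^ q ^ i
      = (-1) ^ n * (monotoneSum (starTerm q L s u ℓ) t i
          * ∏ e ∈ Icc t n, starTerm q L s u ℓ e i) := by
  have hprod : ∏ e ∈ Icc t n, starTerm q L s u ℓ e i
      = (∏ e ∈ Icc (ℓ + t) (ℓ + n), u e ^ q ^ i) * (L i ^ d (ℓ + t))⁻¹ := by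
    rw [hd, ← map_add_left_Icc, prod_map, sum_map, ← prod_pow_eq_pow_sum, ← prod_inv_distrib,
      ← prod_mul_distrib]
    rfl
  have hsign : (-1 : K) ^ n = (-1) ^ t * (-1) ^ (n - t) := by
    rw [← pow_add, Nat.add_sub_cancel' ht]
  rw [yform_add, Nat.add_sub_add_left, hprod, hsign]
  ring

end

theorem stmt10_general {K : Type*} [Field K] (q : ℕ) (L : ℕ → K)
    (r ℓ : ℕ) (hlr : ℓ ≤ r)
    (s : ℕ → ℕ) (d : ℕ → ℕ)
    (hd : ∀ n, d n = ∑ e ∈ Finset.Icc n r, s e) (u : ℕ → K) (N : ℕ) :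
    ∑ i ∈ Finset.range (N + 1), ∑ m ∈ Finset.Icc ℓ r,
        yform q L s d u ℓ i m * (-1 : K) ^ (r - m) * ∏ e ∈ Finset.Icc m r, u e ^ q ^ i
      = (-1 : K) ^ (r - ℓ) *
        ∑ f ∈ Finset.univ.filter (fun f : Fin (r - ℓ + 1) → Fin (N + 1) => Monotone f),
          ∏ j : Fin (r - ℓ + 1),
            u (ℓ + (j : ℕ)) ^ q ^ ((f j : ℕ)) * (L ((f j : ℕ)) ^ s (ℓ + (j : ℕ)))⁻¹ := by
  obtain ⟨n, rfl⟩ : ∃ n, r = ℓ + n := ⟨r - ℓ, by omega⟩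
  have hIcc : Icc ℓ (ℓ + n) = (range (n + 1)).map (addLeftEmbedding ℓ) := by
    rw [Nat.range_succ_eq_Icc_zero, map_add_left_Icc, add_zero]
  rw [Nat.add_sub_cancel_left]
  calc _ = ∑ i ∈ range (N + 1), ∑ t ∈ range (n + 1), (-1) ^ n *
          (monotoneSum (starTerm q L s u ℓ) t i * ∏ e ∈ Icc t n, starTerm q L s u ℓ e i) := by
        refine sum_congr rfl fun i _ => ?_
        rw [hIcc, sum_map]
        exact sum_congr rfl fun t ht =>
          yform_mul_prod_Icc q L s d u ℓ (Nat.lt_succ_iff.1 (mem_range.1 ht)) (hd _) i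
    _ = (-1) ^ n * monotoneSum (starTerm q L s u ℓ) (n + 1) (N + 1) := by
        simp_rw [← mul_sum, sum_range_monotoneSum_mul_prod_Icc, monotoneSum_succ_eq_sum_range]

/-- (truncated form) the reindexing identity
`Σ_{i} Σ_{m=ℓ}^{r} y_i[ℓ m](−1)^{r−m} u_m^{q^i}⋯u_r^{q^i}
 = (−1)^{r−ℓ} Σ_{0 ≤ i_ℓ ≤ ⋯ ≤ i_r} u_ℓ^{q^{i_ℓ}}⋯u_r^{q^{i_r}}/(L_{i_ℓ}^{s_ℓ}⋯L_{i_r}^{s_r})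
 = (−1)^{r−ℓ} Li*_{(s_r,…,s_ℓ)}(u_r,…,u_ℓ)` (all indices truncated at `N`). -/
theorem stmt10 {K : Type*} [Field K] (q : ℕ) (hq : 2 ≤ q) (th : K) (L : ℕ → K)
    (hL0 : L 0 = 1) (hLrec : ∀ i, L (i + 1) = (th - th ^ q ^ (i + 1)) * L i)
    (hL : ∀ i, L i ≠ 0) (r ℓ : ℕ) (hℓ : 1 ≤ ℓ) (hlr : ℓ ≤ r)
    (s : ℕ → ℕ) (hs : ∀ n, 0 < s n) (d : ℕ → ℕ)
    (hd : ∀ n, d n = ∑ e ∈ Finset.Icc n r, s e) (u : ℕ → K) (N : ℕ) :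
    ∑ i ∈ Finset.range (N + 1), ∑ m ∈ Finset.Icc ℓ r,
        yform q L s d u ℓ i m * (-1 : K) ^ (r - m) * ∏ e ∈ Finset.Icc m r, u e ^ q ^ i
      = (-1 : K) ^ (r - ℓ) *
        ∑ f ∈ Finset.univ.filter (fun f : Fin (r - ℓ + 1) → Fin (N + 1) => Monotone f),
          ∏ j : Fin (r - ℓ + 1),
            u (ℓ + (j : ℕ)) ^ q ^ ((f j : ℕ)) * (L ((f j : ℕ)) ^ s (ℓ + (j : ℕ)))⁻¹ :=
  stmt10_general q L r ℓ hlr s d hd u N
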